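/- For all integers k ≥ 2 and m ≥ k−1, every m-dimensional volume k-metric is a binom(m, k−1)-dimensional coboundary k-metric with respect to the ℓ_2 norm: V_k^m ⊆ C_{k,2}^{m′} with m′ = binom(m, k−1). In particular every volume k-metric is a coboundary k-metric with respect to the ℓ_2 norm, and hence a strong pseudo k-metric. -/

import Mathlib

open scoped BigOperators

/-- An alternating real-valued function on `j`-tuples of `X`
(a `(j-1)`-dimensional chain on the complete complex on `X`). -/
def AltChain {X : Type*} {j : ℕ} (α : (Fin j → X) → ℝ) : Prop :=
  ∀ (π : Equiv.Perm (Fin j)) (x : Fin j → X),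
    α (x ∘ π) = ((Equiv.Perm.sign π : ℤ) : ℝ) * α x

/-- The boundary operator: `(∂α)(y₁,…,y_j) = ∑_{x ∈ X} α(x, y₁, …, y_j)`. -/
noncomputable def bdry {X : Type*} [Fintype X] {j : ℕ}
    (α : (Fin (j + 1) → X) → ℝ) : (Fin j → X) → ℝ :=
  fun y => ∑ x : X, α (Fin.cons x y)

/-- The elementary chain `1_t`: value `sign π` on the reordering of `t` by `π`,
and `0` on all other tuples. -/
noncomputable def unitChain {X : Type*} [DecidableEq X] {j : ℕ} (t : Fin j → X) :
    (Fin j → X) → ℝ :=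
  fun s => ∑ π : Equiv.Perm (Fin j),
    if s = t ∘ π then ((Equiv.Perm.sign π : ℤ) : ℝ) else 0

/-- The coboundary operator:
`(δf)(x₁,…,x_{j+2}) = ∑ᵢ (-1)^(i+1) f(x₁,…,x̂ᵢ,…,x_{j+2})` (`0`-indexed sign `(-1)^i`). -/
noncomputable def cobdry {X : Type*} {j : ℕ}
    (f : (Fin (j + 1) → X) → ℝ) : (Fin (j + 2) → X) → ℝ :=
  fun x => ∑ i : Fin (j + 2), (-1 : ℝ) ^ (i : ℕ) * f (x ∘ i.succAbove)

/-- A pseudo metric of arity `K` (a pseudo `K`-metric): nonnegative, vanishing on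
non-injective tuples, permutation invariant, satisfying the simplex inequality. -/
structure IsPseudoMetric {X : Type*} (K : ℕ) (d : (Fin K → X) → ℝ) : Prop where
  nonneg : ∀ x, 0 ≤ d x
  eq_zero : ∀ x, ¬ Function.Injective x → d x = 0
  perm : ∀ (π : Equiv.Perm (Fin K)) (x), d (x ∘ π) = d x
  simplex : ∀ (x : Fin K → X) (y : X),
    d x ≤ ∑ i : Fin K, d (Function.update x i y)

/-- A strong pseudo metric of arity `k + 1` (a strong pseudo `(k+1)`-metric).
The strong simplex inequality `d t ≤ ∑_τ |α(τ)| * d(τ)` (with the sum over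
`(k+1)`-element subsets `τ` of `X`, each evaluated on any fixed ordering of `τ`)
is stated in the equivalent form `(k+1)! * d t ≤ ∑_s |α(s)| * d(s)` with the sum
over all `(k+1)`-tuples `s`: since `α` is alternating and `d` is permutation
invariant, the summand depends only on the underlying set of `s` (it vanishes on
tuples with repeated entries), and each `(k+1)`-element subset has exactly
`(k+1)!` orderings. -/
structure IsStrongPseudoMetric {X : Type*} [Fintype X] [DecidableEq X] (k : ℕ)
    (d : (Fin (k + 1) → X) → ℝ) : Prop where
  nonneg : ∀ x, 0 ≤ d x
  eq_zero : ∀ x, ¬ Function.Injective x → d x = 0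
  perm : ∀ (π : Equiv.Perm (Fin (k + 1))) (x), d (x ∘ π) = d x
  strong_simplex : ∀ t : Fin (k + 1) → X, Function.Injective t →
    ∀ α : (Fin (k + 1) → X) → ℝ, AltChain α → bdry α = bdry (unitChain t) →
      ((k + 1).factorial : ℝ) * d t ≤ ∑ s : Fin (k + 1) → X, |α s| * d s

/-- `(X, d)` is a coboundary metric of arity `k + 2` in `m` dimensions with respect
to the norm `ν` on `ℝ^m`: there are chains `f 1, …, f m` on `(k+1)`-tuples (i.e.
`(k+2)-2`-dimensional chains for arity `k+2`) whose simultaneous coboundary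
realizes `d` on injective tuples, and `d` vanishes on non-injective tuples. -/
def IsCoboundaryMetric {X : Type*} (k m : ℕ) (ν : (Fin m → ℝ) → ℝ)
    (d : (Fin (k + 2) → X) → ℝ) : Prop :=
  ∃ f : Fin m → ((Fin (k + 1) → X) → ℝ),
    (∀ i, AltChain (f i)) ∧
    (∀ x, Function.Injective x → d x = ν (fun i => cobdry (f i) x)) ∧
    (∀ x, ¬ Function.Injective x → d x = 0)

/-- `ν` is a norm on `ℝ^m`. -/
structure IsNorm {m : ℕ} (ν : (Fin m → ℝ) → ℝ) : Prop where
  nonneg : ∀ x, 0 ≤ ν x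
  eq_zero_iff : ∀ x, ν x = 0 ↔ x = 0
  homog : ∀ (c : ℝ) (x), ν (c • x) = |c| * ν x
  triangle : ∀ x y, ν (x + y) ≤ ν x + ν y

/-- The `ℓ_p` norm on `ℝ^m` for real `p`. -/
noncomputable def lpNorm (p : ℝ) {m : ℕ} (x : Fin m → ℝ) : ℝ :=
  (∑ i, |x i| ^ p) ^ (1 / p)

/-- The `ℓ_1` norm on `ℝ^m`. -/
noncomputable def l1Norm {m : ℕ} (x : Fin m → ℝ) : ℝ := ∑ i, |x i|

/-- The `ℓ_2` (Euclidean) norm on `ℝ^m`. -/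
noncomputable def l2Norm {m : ℕ} (x : Fin m → ℝ) : ℝ := Real.sqrt (∑ i, x i ^ 2)

/-- The `ℓ_∞` norm on `ℝ^m` (the sup norm, which is the norm of `Fin m → ℝ`). -/
noncomputable def linfNorm {m : ℕ} (x : Fin m → ℝ) : ℝ := ‖x‖

/- The apex extension of `d` (of arity `K`), with the apex being
`none : Option X` (a new element not in `X`): on an injective `(K+1)`-tuple
containing the apex in position `i` it is `d` of the tuple with position `i`
removed, and it is `0` on all other tuples. -/
open Classical in
noncomputable def apexExt {X : Type*} {K : ℕ} (d : (Fin K → X) → ℝ) :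
    (Fin (K + 1) → Option X) → ℝ := fun x =>
  if h : Function.Injective x ∧ ∃ i, x i = none then
    d (fun j =>
      Option.get (x ((Classical.choose h.2).succAbove j))
        (by
          rw [Option.isSome_iff_ne_none]
          intro hnone
          exact Fin.succAbove_ne (Classical.choose h.2) j
            (h.1 (hnone.trans (Classical.choose_spec h.2).symm))))
  else 0

/-- The `K`-dimensional volume of the simplex with vertices `y 0, …, y K` in `ℝ^m`:
`(1/K!) * √(det (AᵀA))` where `A` is the `m × K` matrix with columns
`y i - y 0`, `i = 1, …, K`. -/
noncomputable def simplexVolume {m K : ℕ} (y : Fin (K + 1) → (Fin m → ℝ)) : ℝ :=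
  (1 / (K.factorial : ℝ)) *
    Real.sqrt
      (Matrix.det
        (Matrix.of fun i j : Fin K =>
          ∑ l : Fin m, (y i.succ l - y 0 l) * (y j.succ l - y 0 l)))

/-!
Put the edge vectors `g (x i) - g (x 0)` in the rows of a `(k+1) × m` matrix `A`. By
Cauchy–Binet, `(k+1)! · vol = √(det (A Aᵀ)) = √(∑_S (det A_S)²)`, the sum over the
`(k+1)`-element sets `S` of coordinates, and by cofactor expansion along a column of ones each
minor `det A_S` is the coboundary of the chain `z ↦ det (g (z a) s)_{a, s ∈ S}`. Scaled by
`1/(k+1)!`, these `binom(m, k+1)` chains exhibit `d` as an `ℓ₂` coboundary metric.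

Every `ℓ₂` coboundary metric is a strong pseudo metric: put `h = ∑ᵢ (δfᵢ)(t) fᵢ`. Since `δ` is
adjoint to `∂`, the condition `∂α = ∂1_t` gives `(k+2)! d(t)² = ∑ₛ α(s) ⟨δf(t), δf(s)⟩`, which
Cauchy–Schwarz bounds by `d(t) ∑ₛ |α(s)| d(s)`.
-/

open Finset

section Chains

variable {X : Type*}

theorem abs_sign_cast {α : Type*} [DecidableEq α] [Fintype α] (π : Equiv.Perm α) :
    |((Equiv.Perm.sign π : ℤ) : ℝ)| = 1 := by
  rcases Int.units_eq_one_or (Equiv.Perm.sign π) with h | h <;> simp [h]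

theorem sign_cast_mul_self {α : Type*} [DecidableEq α] [Fintype α] (π : Equiv.Perm α) :
    ((Equiv.Perm.sign π : ℤ) : ℝ) * ((Equiv.Perm.sign π : ℤ) : ℝ) = 1 := by
  rw [← abs_mul_abs_self, abs_sign_cast, one_mul]

theorem AltChain.const_mul {j : ℕ} {α : (Fin j → X) → ℝ} (hα : AltChain α) (c : ℝ) :
    AltChain fun s => c * α s := fun π s => by
  simp only [hα π s]
  ring

theorem AltChain.eq_zero_of_not_injective {j : ℕ} {α : (Fin j → X) → ℝ} (hα : AltChain α)
    {s : Fin j → X} (hs : ¬ Function.Injective s) : α s = 0 := by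
  obtain ⟨a, b, hab, hne⟩ : ∃ a b, s a = s b ∧ a ≠ b := by
    simpa [Function.Injective] using hs
  have hswap : s ∘ Equiv.swap a b = s := by
    funext w
    rcases eq_or_ne w a with rfl | hwa
    · simp [hab]
    rcases eq_or_ne w b with rfl | hwb
    · simp [hab]
    · simp [Equiv.swap_apply_of_ne_of_ne hwa hwb]
  have := hα (Equiv.swap a b) s
  rw [hswap, Equiv.Perm.sign_swap hne] at this
  push_cast at this
  linarith

theorem altChain_unitChain [DecidableEq X] {j : ℕ} (t : Fin j → X) :
    AltChain (unitChain t) := by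
  intro σ s
  simp only [unitChain, mul_sum]
  refine (Fintype.sum_equiv (Equiv.mulRight σ) _ _ fun π => ?_).symm
  have hiff : s ∘ σ = t ∘ (π * σ) ↔ s = t ∘ π := by
    rw [Equiv.Perm.coe_mul, ← Function.comp_assoc]
    exact σ.surjective.injective_comp_right.eq_iff
  simp only [Equiv.coe_mulRight, hiff, Equiv.Perm.sign_mul]
  split_ifs
  · push_cast
    ring
  · rw [mul_zero]

theorem sum_unitChain_mul [Fintype X] [DecidableEq X] {j : ℕ} (t : Fin j → X)
    {w : (Fin j → X) → ℝ} (hw : AltChain w) :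
    ∑ s, unitChain t s * w s = (j.factorial : ℝ) * w t := by
  simp only [unitChain, sum_mul]
  rw [sum_comm]
  have hterm : ∀ π : Equiv.Perm (Fin j),
      ∑ s, (if s = t ∘ π then ((Equiv.Perm.sign π : ℤ) : ℝ) else 0) * w s = w t := by
    intro π
    rw [sum_eq_single_of_mem (t ∘ π) (mem_univ _) fun s _ hs => by rw [if_neg hs, zero_mul],
      if_pos rfl, hw π t, ← mul_assoc, sign_cast_mul_self, one_mul]
  rw [sum_congr rfl fun π _ => hterm π, sum_const, card_univ, Fintype.card_perm,
    Fintype.card_fin, nsmul_eq_mul]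

theorem cobdry_sum_mul {j M : ℕ} (w : Fin M → ℝ) (f : Fin M → (Fin (j + 1) → X) → ℝ)
    (x : Fin (j + 2) → X) :
    cobdry (fun z => ∑ i, w i * f i z) x = ∑ i, w i * cobdry (f i) x := by
  simp only [cobdry, mul_sum]
  rw [sum_comm]
  exact sum_congr rfl fun _ _ => sum_congr rfl fun _ _ => by ring

theorem cobdry_const_mul {j : ℕ} (c : ℝ) (f : (Fin (j + 1) → X) → ℝ) (x : Fin (j + 2) → X) :
    cobdry (fun z => c * f z) x = c * cobdry f x := by
  simpa using cobdry_sum_mul (fun _ : Fin 1 => c) (fun _ => f) x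

theorem Fin.insertNth_eq_cons_comp_cycleRange {n : ℕ} (i : Fin (n + 1)) (x : X) (y : Fin n → X) :
    i.insertNth x y = Fin.cons x y ∘ i.cycleRange := by
  funext w
  rcases eq_or_ne w i with rfl | hw
  · simp
  · obtain ⟨w', rfl⟩ := Fin.exists_succAbove_eq hw
    simp [Fin.cycleRange_succAbove]

theorem sum_mul_cobdry [Fintype X] {j : ℕ} {β : (Fin (j + 2) → X) → ℝ} (hβ : AltChain β)
    (h : (Fin (j + 1) → X) → ℝ) :
    ∑ s, β s * cobdry h s = (j + 2 : ℝ) * ∑ y, bdry β y * h y := by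
  have hface : ∀ i : Fin (j + 2),
      ∑ s, β s * ((-1 : ℝ) ^ (i : ℕ) * h (s ∘ i.succAbove)) = ∑ y, bdry β y * h y := by
    intro i
    rw [← (Fin.insertNthEquiv (fun _ => X) i).sum_comp, Fintype.sum_prod_type, sum_comm]
    refine sum_congr rfl fun y _ => ?_
    rw [bdry, sum_mul]
    refine sum_congr rfl fun x _ => ?_
    have hβi : β (i.insertNth x y) = (-1 : ℝ) ^ (i : ℕ) * β (Fin.cons x y) := by
      rw [Fin.insertNth_eq_cons_comp_cycleRange, hβ, Fin.sign_cycleRange]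
      simp
    have hsq : (-1 : ℝ) ^ (i : ℕ) * (-1 : ℝ) ^ (i : ℕ) = 1 := by
      rw [← pow_add, Even.neg_one_pow ⟨i, rfl⟩]
    change β (i.insertNth x y) * ((-1) ^ (i : ℕ) * h (i.insertNth x y ∘ i.succAbove)) = _
    rw [Fin.insertNth_comp_succAbove, hβi, mul_mul_mul_comm, hsq, one_mul]
  have hexpand : ∑ s, β s * cobdry h s
      = ∑ i : Fin (j + 2), ∑ s, β s * ((-1 : ℝ) ^ (i : ℕ) * h (s ∘ i.succAbove)) := by
    simp only [cobdry, mul_sum]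
    exact sum_comm
  rw [hexpand, sum_congr rfl fun i _ => hface i, sum_const, card_univ, Fintype.card_fin,
    nsmul_eq_mul]
  push_cast
  ring

end Chains

section L2Norm

variable {M : ℕ}

theorem l2Norm_nonneg (w : Fin M → ℝ) : 0 ≤ l2Norm w := Real.sqrt_nonneg _

theorem sq_l2Norm (w : Fin M → ℝ) : l2Norm w ^ 2 = ∑ i, w i ^ 2 :=
  Real.sq_sqrt (sum_nonneg fun i _ => sq_nonneg (w i))

theorem l2Norm_const_mul (c : ℝ) (w : Fin M → ℝ) :
    l2Norm (fun i => c * w i) = |c| * l2Norm w := by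
  simp only [l2Norm, mul_pow, ← mul_sum, Real.sqrt_mul (sq_nonneg c), Real.sqrt_sq_eq_abs]

theorem l2Norm_zero : l2Norm (0 : Fin M → ℝ) = 0 := by
  simp [l2Norm]

theorem sum_mul_le_l2Norm_mul_l2Norm (u w : Fin M → ℝ) :
    ∑ i, u i * w i ≤ l2Norm u * l2Norm w :=
  Real.sum_mul_le_sqrt_mul_sqrt _ u w

end L2Norm

theorem isStrongPseudoMetric_l2Norm_cobdry {X : Type*} [Fintype X] [DecidableEq X] {k M : ℕ}
    (f : Fin M → (Fin (k + 1) → X) → ℝ) (hδf : ∀ i, AltChain (cobdry (f i))) :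
    IsStrongPseudoMetric (k + 1) fun x => l2Norm fun i => cobdry (f i) x := by
  set d : (Fin (k + 2) → X) → ℝ := fun x => l2Norm fun i => cobdry (f i) x
  have hd_nonneg : ∀ x, 0 ≤ d x := fun x => l2Norm_nonneg _
  refine ⟨hd_nonneg, fun x hx => ?_, fun π x => ?_, fun t _ α hα hbd => ?_⟩
  · simp only [d, (hδf _).eq_zero_of_not_injective hx]
    exact l2Norm_zero
  · simp only [d, hδf _ π x, l2Norm_const_mul, abs_sign_cast, one_mul]
  set h : (Fin (k + 1) → X) → ℝ := fun y => ∑ i, cobdry (f i) t * f i y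
  have hδh : ∀ s, cobdry h s = ∑ i, cobdry (f i) t * cobdry (f i) s :=
    cobdry_sum_mul _ f
  have hδh_alt : AltChain (cobdry h) := fun π s => by
    simp only [hδh, hδf _ π s, mul_sum]
    exact sum_congr rfl fun i _ => by ring
  have hpair : ((k + 2).factorial : ℝ) * d t ^ 2 = ∑ s, α s * cobdry h s := by
    calc ((k + 2).factorial : ℝ) * d t ^ 2 = ((k + 2).factorial : ℝ) * cobdry h t := by
          simp only [d]
          rw [sq_l2Norm, hδh]
          simp only [sq]
      _ = ∑ s, unitChain t s * cobdry h s := (sum_unitChain_mul t hδh_alt).symm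
      _ = ∑ s, α s * cobdry h s := by
          rw [sum_mul_cobdry (altChain_unitChain t), sum_mul_cobdry hα, hbd]
  have hbound : ∀ s, α s * cobdry h s ≤ |α s| * d s * d t := fun s =>
    calc α s * cobdry h s = ∑ i, cobdry (f i) t * (α s * cobdry (f i) s) := by
          rw [hδh, mul_sum]
          exact sum_congr rfl fun i _ => by ring
      _ ≤ d t * l2Norm (fun i => α s * cobdry (f i) s) := sum_mul_le_l2Norm_mul_l2Norm _ _
      _ = |α s| * d s * d t := by rw [l2Norm_const_mul]; ring
  have hsum : ((k + 2).factorial : ℝ) * d t * d t ≤ (∑ s, |α s| * d s) * d t := by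
    rw [mul_assoc, ← sq, hpair, sum_mul]
    exact sum_le_sum fun s _ => hbound s
  rcases (hd_nonneg t).eq_or_lt with ht | ht
  · rw [← ht, mul_zero]
    exact sum_nonneg fun s _ => mul_nonneg (abs_nonneg _) (hd_nonneg s)
  · exact le_of_mul_le_mul_right hsum ht

namespace Matrix

variable {R : Type*} [CommRing R] {K m : ℕ}

theorem det_mul_eq_sum_prod_mul_det_submatrix (A : Matrix (Fin K) (Fin m) R)
    (B : Matrix (Fin m) (Fin K) R) :
    (A * B).det = ∑ r : Fin K → Fin m, (∏ i, A i (r i)) * (B.submatrix r id).det := by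
  have hrows : A * B = of fun i => ∑ l, A i l • B l := by
    ext i j
    simp [mul_apply]
  calc (A * B).det = detRowAlternating (fun i => ∑ l, A i l • B l) := by rw [hrows]; rfl
    _ = ∑ r : Fin K → Fin m, detRowAlternating (fun i => A i (r i) • B (r i)) :=
      (detRowAlternating : (Fin K → R) [⋀^Fin K]→ₗ[R] R).toMultilinearMap.map_sum _
    _ = _ := sum_congr rfl fun r _ =>
      (MultilinearMap.map_smul_univ _ (fun i => A i (r i)) (fun i => B (r i))).trans rfl

theorem det_mul_eq_sum_det_mul_det (A : Matrix (Fin K) (Fin m) R)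
    (B : Matrix (Fin m) (Fin K) R) :
    (A * B).det = ∑ S : {s : Finset (Fin m) // s.card = K},
      (A.submatrix id (S.1.orderEmbOfFin S.2)).det *
        (B.submatrix (S.1.orderEmbOfFin S.2) id).det := by
  rw [det_mul_eq_sum_prod_mul_det_submatrix]
  symm
  calc _ = ∑ p : {s : Finset (Fin m) // s.card = K} × Equiv.Perm (Fin K),
        (∏ i, A i (p.1.1.orderEmbOfFin p.1.2 (p.2 i))) *
          (B.submatrix (p.1.1.orderEmbOfFin p.1.2 ∘ p.2) id).det := by
        rw [Fintype.sum_prod_type]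
        refine sum_congr rfl fun S _ => ?_
        rw [← det_transpose (A.submatrix _ _), det_apply', sum_mul]
        refine sum_congr rfl fun σ _ => ?_
        rw [show B.submatrix (S.1.orderEmbOfFin S.2 ∘ σ) id
            = (B.submatrix (S.1.orderEmbOfFin S.2) id).submatrix σ id from rfl, det_permute]
        simp only [transpose_apply, submatrix_apply, id_eq]
        ring
    _ = _ := by
      refine Fintype.sum_of_injective (fun p => p.1.1.orderEmbOfFin p.1.2 ∘ p.2) ?_ _ _ ?_
        fun _ => rfl
      · rintro ⟨S, σ⟩ ⟨T, τ⟩ h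
        have hST : S = T := by
          refine Subtype.ext (Finset.coe_injective ?_)
          simpa only [Set.range_comp, σ.range_eq_univ, τ.range_eq_univ, Set.image_univ,
            range_orderEmbOfFin] using congrArg Set.range h
        subst hST
        simp only [Prod.mk.injEq, true_and]
        exact Equiv.ext fun i => (S.1.orderEmbOfFin S.2).injective (congrFun h i)
      · intro r hr
        suffices ¬ Function.Injective r by
          obtain ⟨a, b, hab, hne⟩ : ∃ a b, r a = r b ∧ a ≠ b := by
            simpa [Function.Injective] using this
          rw [det_zero_of_row_eq hne (by ext j; simp [hab]), mul_zero]
        intro hinj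
        have hS : (univ.image r).card = K := by
          rw [card_image_of_injective _ hinj, card_univ, Fintype.card_fin]
        let e := (univ.image r).orderIsoOfFin hS
        let σ : Fin K → Fin K := fun i => e.symm ⟨r i, mem_image_of_mem r (mem_univ i)⟩
        have hσ : Function.Bijective σ := Finite.injective_iff_bijective.mp fun a b hab =>
          hinj (congrArg Subtype.val (e.symm.injective hab))
        refine hr ⟨(⟨_, hS⟩, Equiv.ofBijective σ hσ), funext fun i => ?_⟩
        simp [σ, e, ← coe_orderIsoOfFin_apply]

theorem det_of_cons_one {n : ℕ} (v : Fin (n + 1) → Fin n → R) :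
    (of fun i => Fin.cons 1 (v i) : Matrix (Fin (n + 1)) (Fin (n + 1)) R).det
      = (of fun a b : Fin n => v a.succ b - v 0 b).det := by
  set B : Matrix (Fin (n + 1)) (Fin (n + 1)) R := of fun i => Fin.cons 1 (v i)
  -- subtract the first row from all the others
  set B' : Matrix (Fin (n + 1)) (Fin (n + 1)) R :=
    of fun i j => if i = 0 then B 0 j else B i j - B 0 j
  have hB' : B.det = B'.det := by
    refine det_eq_of_forall_row_eq_smul_add_const (fun i => if i = 0 then 0 else 1) 0
      (if_pos rfl) fun i j => ?_
    rcases eq_or_ne i 0 with rfl | hi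
    · simp [B']
    · simp [B', hi]
  rw [hB', det_succ_column_zero, sum_eq_single_of_mem 0 (mem_univ _) fun i _ hi => by
    simp [B', B, hi]]
  simp only [B', B, Fin.val_zero, pow_zero, one_mul, of_apply, if_true, Fin.cons_zero,
    Fin.succAbove_zero]
  congr 1

end Matrix

section DetChain

variable {X : Type*}

noncomputable def detChain {n : ℕ} (v : X → Fin n → ℝ) : (Fin n → X) → ℝ :=
  fun z => (Matrix.of fun a b => v (z a) b).det

theorem altChain_detChain {n : ℕ} (v : X → Fin n → ℝ) : AltChain (detChain v) :=
  fun π z => Matrix.det_permute π (Matrix.of fun a b => v (z a) b)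

theorem cobdry_detChain {n : ℕ} (v : X → Fin (n + 1) → ℝ) (x : Fin (n + 2) → X) :
    cobdry (detChain v) x
      = (Matrix.of fun i => Fin.cons 1 (v (x i)) : Matrix (Fin (n + 2)) (Fin (n + 2)) ℝ).det := by
  rw [Matrix.det_succ_column_zero]
  refine sum_congr rfl fun i _ => ?_
  simp only [Matrix.of_apply, Fin.cons_zero, mul_one]
  rfl

theorem altChain_cobdry_detChain {n : ℕ} (v : X → Fin (n + 1) → ℝ) :
    AltChain (cobdry (detChain v)) := fun π x => by
  simp only [cobdry_detChain]
  exact Matrix.det_permute π (Matrix.of fun i => Fin.cons 1 (v (x i)))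

theorem cobdry_detChain_eq_det_sub {n : ℕ} (v : X → Fin (n + 1) → ℝ) (x : Fin (n + 2) → X) :
    cobdry (detChain v) x = (Matrix.of fun a b => v (x a.succ) b - v (x 0) b).det := by
  rw [cobdry_detChain, Matrix.det_of_cons_one fun i => v (x i)]

end DetChain

theorem simplexVolume_eq_sqrt_sum_sq_det {m K : ℕ} (y : Fin (K + 1) → Fin m → ℝ) :
    simplexVolume y = 1 / (K.factorial : ℝ) * √(∑ S : {s : Finset (Fin m) // s.card = K},
      (Matrix.of fun a b =>
        y a.succ (S.1.orderEmbOfFin S.2 b) - y 0 (S.1.orderEmbOfFin S.2 b)).det ^ 2) := by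
  set A : Matrix (Fin K) (Fin m) ℝ := Matrix.of fun a l => y a.succ l - y 0 l
  have hgram : (Matrix.of fun i j : Fin K =>
      ∑ l : Fin m, (y i.succ l - y 0 l) * (y j.succ l - y 0 l)) = A * A.transpose := by
    ext i j
    simp [A, Matrix.mul_apply]
  rw [simplexVolume, hgram, Matrix.det_mul_eq_sum_det_mul_det]
  congr 2
  refine sum_congr rfl fun S _ => ?_
  rw [← Matrix.transpose_submatrix, Matrix.det_transpose, ← sq]
  rfl

theorem stmt_15_general (k m : ℕ) {X : Type*} [Fintype X] [DecidableEq X]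
    (g : X → (Fin m → ℝ)) (d : (Fin (k + 2) → X) → ℝ)
    (hd : ∀ x : Fin (k + 2) → X,
      d x = simplexVolume (m := m) (K := k + 1) fun i => g (x i)) :
    IsCoboundaryMetric k (m.choose (k + 1)) l2Norm d ∧
      IsStrongPseudoMetric (k + 1) d := by
  let E : Fin (m.choose (k + 1)) ≃ {s : Finset (Fin m) // s.card = k + 1} :=
    (Fintype.equivFinOfCardEq (by simp [Fintype.card_finset_len])).symm
  let c : ℝ := 1 / ((k + 1).factorial : ℝ)
  let v (i : Fin (m.choose (k + 1))) : X → Fin (k + 1) → ℝ :=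
    fun p b => g p ((E i).1.orderEmbOfFin (E i).2 b)
  let f (i : Fin (m.choose (k + 1))) : (Fin (k + 1) → X) → ℝ := fun z => c * detChain (v i) z
  have hδf (i) (x) : cobdry (f i) x = c * cobdry (detChain (v i)) x := cobdry_const_mul _ _ _
  have hd_eq : d = fun x => l2Norm fun i => cobdry (f i) x := by
    funext x
    have hc : 0 ≤ c := by positivity
    calc d x = c * l2Norm fun i => cobdry (detChain (v i)) x := by
          rw [hd, simplexVolume_eq_sqrt_sum_sq_det, ← E.sum_comp]
          simp only [cobdry_detChain_eq_det_sub]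
          rfl
      _ = l2Norm fun i => cobdry (f i) x := by
          simp only [hδf]
          rw [l2Norm_const_mul, abs_of_nonneg hc]
  have hstrong : IsStrongPseudoMetric (k + 1) d := hd_eq ▸
    isStrongPseudoMetric_l2Norm_cobdry f fun i =>
      funext (hδf i) ▸ (altChain_cobdry_detChain (v i)).const_mul c
  exact ⟨⟨f, fun i => (altChain_detChain (v i)).const_mul c, fun x _ => congrFun hd_eq x,
    hstrong.eq_zero⟩, hstrong⟩

/-- for `m ≥ k + 1`, every `m`-dimensional volume metric of arity
`k + 2` is a `binom(m, k+1)`-dimensional coboundary metric with respect to the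
`ℓ_2` norm; in particular it is a strong pseudo metric. -/
theorem stmt_15 (k m : ℕ) (hm : k + 1 ≤ m) {X : Type*} [Fintype X] [DecidableEq X]
    (g : X → (Fin m → ℝ)) (d : (Fin (k + 2) → X) → ℝ)
    (hd : ∀ x : Fin (k + 2) → X,
      d x = simplexVolume (m := m) (K := k + 1) fun i => g (x i)) :
    IsCoboundaryMetric k (m.choose (k + 1)) l2Norm d ∧
      IsStrongPseudoMetric (k + 1) d :=
  stmt_15_general k m g d hd
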